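/- If a1, a2, a3 ∈ (0, 1/2] and a1 + a2 + a3 = 1/2, then Q(a1, a2, a3) ≠ 0. (Hence no parameter triple in (0,1/2]^3 lying on the plane a1 + a2 + a3 = 1/2 belongs to the degeneration set Ω = {Q = 0}.) -/
import Mathlib


noncomputable section
open Real Set

/-- The degeneration polynomial `Q`. -/
def Qpoly (a1 a2 a3 : ℝ) : ℝ :=
  let s1 := a1 + a2 + a3
  let s2 := a1*a2 + a1*a3 + a2*a3
  let s3 := a1*a2*a3
  (2*s1 + 4*s3 - 1)*(64*s1^5 - 64*s1^4 + 8*s1^3 + 12*s1^2 - 6*s1 + 1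
      + 240*s3*s1^2 - 240*s3*s1 - 1536*s3^2*s1 - 4096*s3^3 + 60*s3 + 768*s3^2)
  - 8*s1*(2*s1 + 4*s3 - 1)*(2*s1 - 32*s3 - 1)*(10*s1 + 32*s3 - 5)*s2
  - 16*s1^2*(13 - 52*s1 + 640*s3*s1 + 1024*s3^2 - 320*s3 + 52*s1^2)*s2^2
  + 64*(2*s1 - 1)*(2*s1 - 32*s3 - 1)*s2^3 + 2048*s1*(2*s1 - 1)*s2^4

theorem Q_nonzero_on_sum_half (a1 a2 a3 : ℝ)
    (ha1 : a1 ∈ Ioc (0:ℝ) (1/2)) (ha2 : a2 ∈ Ioc (0:ℝ) (1/2)) (ha3 : a3 ∈ Ioc (0:ℝ) (1/2))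
    (hsum : a1 + a2 + a3 = 1/2) :
    Qpoly a1 a2 a3 ≠ 0 := by
  obtain ⟨h1, _⟩ := ha1
  obtain ⟨h2, _⟩ := ha2
  obtain ⟨h3, _⟩ := ha3
  have h3' : a3 = 1/2 - a1 - a2 := by linarith
  subst h3'
  have key : Qpoly a1 a2 (1/2 - a1 - a2) =
      -4096 * (a1*a2*(1/2 - a1 - a2))^2 *
        ((a1*a2 + a1*(1/2 - a1 - a2) + a2*(1/2 - a1 - a2))
          - 2*(a1*a2*(1/2 - a1 - a2)))^2 := by
    unfold Qpoly; ring
  rw [key]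
  have hs3 : a1*a2*(1/2 - a1 - a2) > 0 := by positivity
  have hfac : (a1*a2 + a1*(1/2 - a1 - a2) + a2*(1/2 - a1 - a2))
      - 2*(a1*a2*(1/2 - a1 - a2)) > 0 := by
    nlinarith [mul_pos (mul_pos h1 h2) (add_pos h1 h2), mul_pos h3 (add_pos h1 h2)]
  nlinarith [sq_nonneg (a1*a2*(1/2 - a1 - a2)), mul_pos hs3 hfac,
    mul_pos (mul_pos hs3 hfac) (mul_pos hs3 hfac)]
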